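/- Let α ∈ (1/2, 1) and let T be sufficiently large. For any real a with 0 < a ≤ 1/(2T^(1−α)), the integral over t from T^(1−α) to T of cos(a t)·w(t) dt is nonnegative, where w(t) = 3 − t/T for t ∈ [T^(1−α), 2T^(1−α)] and w(t) = 1 − t/T for t ∈ (2T^(1−α), T]. -/

import Mathlib

open intervalIntegral

/-- The weight function `w`. -/
noncomputable def wfun (T α t : ℝ) : ℝ :=
  if t ≤ 2 * T ^ (1 - α) then 3 - t / T else 1 - t / T

theorem stmt_9 (α : ℝ) (hα : α ∈ Set.Ioo (1/2 : ℝ) 1) :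
    ∃ T₀ : ℝ, ∀ T : ℝ, T₀ ≤ T →
      ∀ a : ℝ, 0 < a → a ≤ 1 / (2 * T ^ (1 - α)) →
        0 ≤ ∫ t in T ^ (1 - α)..T, Real.cos (a * t) * wfun T α t := by
  obtain ⟨hα1, hα2⟩ := hα
  refine ⟨4, fun T hT a ha hale => ?_⟩
  set X := T ^ (1 - α) with hXdef
  have hT0 : (0:ℝ) < T := by linarith
  have hT1 : (1:ℝ) ≤ T := by linarith
  have hX1 : (1:ℝ) ≤ X := Real.one_le_rpow hT1 (by linarith)
  have hX0 : (0:ℝ) < X := by linarith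
  have hXT : X ≤ T := by
    calc X = T ^ (1-α) := rfl
    _ ≤ T ^ (1:ℝ) := Real.rpow_le_rpow_of_exponent_le hT1 (by linarith)
    _ = T := Real.rpow_one T
  have hTa : (2:ℝ) ≤ T ^ α := by
    have h4 : (2:ℝ) = 4 ^ (1/2:ℝ) := by
      rw [show (4:ℝ) = 2^(2:ℕ) by norm_num, ← Real.rpow_natCast 2 2, ← Real.rpow_mul (by norm_num)]
      norm_num
    calc (2:ℝ) = 4 ^ (1/2:ℝ) := h4
    _ ≤ T ^ (1/2:ℝ) := Real.rpow_le_rpow (by norm_num) hT (by norm_num)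
    _ ≤ T ^ α := Real.rpow_le_rpow_of_exponent_le hT1 (le_of_lt hα1)
  have hmul : X * T ^ α = T := by
    rw [hXdef, ← Real.rpow_add hT0]; simp
  have h2XT : 2 * X ≤ T := by nlinarith
  have hX2X : X ≤ 2 * X := by linarith
  -- a * t ≤ 1 for t ≤ 2X
  have hat1 : ∀ t : ℝ, 0 ≤ t → t ≤ 2 * X → a * t ≤ 1 := by
    intro t ht0 ht2
    have h2X0 : (0:ℝ) < 2 * X := by linarith
    calc a * t ≤ (1 / (2*X)) * (2*X) := by
          apply mul_le_mul hale ht2 ht0 (by positivity)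
    _ = 1 := by field_simp
  -- continuity facts
  have c1 : Continuous (fun t : ℝ => Real.cos (a*t) * (1 - t/T)) := by fun_prop
  have c3 : Continuous (fun t : ℝ => Real.cos (a*t) * (3 - t/T)) := by fun_prop
  have c2 : Continuous (fun t : ℝ => 2 * Real.cos (a*t)) := by fun_prop
  -- congruences on pieces
  have e1 : (∫ t in X..(2*X), Real.cos (a*t) * wfun T α t)
      = ∫ t in X..(2*X), Real.cos (a*t) * (3 - t/T) := by
    apply intervalIntegral.integral_congr
    intro t ht
    rw [Set.uIcc_of_le hX2X] at ht
    simp only [wfun, if_pos (show t ≤ 2 * T ^ (1 - α) from ht.2)]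
  have e2 : (∫ t in (2*X)..T, Real.cos (a*t) * wfun T α t)
      = ∫ t in (2*X)..T, Real.cos (a*t) * (1 - t/T) := by
    apply intervalIntegral.integral_congr_ae
    filter_upwards with t ht
    rw [Set.uIoc_of_le h2XT] at ht
    simp only [wfun, if_neg (show ¬ t ≤ 2 * T ^ (1 - α) from not_le.2 ht.1)]
  -- integrability of the wfun integrand on the pieces
  have i1 : IntervalIntegrable (fun t => Real.cos (a*t) * wfun T α t) MeasureTheory.volume X (2*X) := by
    rw [intervalIntegrable_iff]
    apply (c3.integrableOn_uIoc (a := X) (b := 2*X)).congr_fun ?_ measurableSet_uIoc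
    intro t ht
    rw [Set.uIoc_of_le hX2X] at ht
    simp only [wfun, if_pos (show t ≤ 2 * T ^ (1 - α) from ht.2)]
  have i2 : IntervalIntegrable (fun t => Real.cos (a*t) * wfun T α t) MeasureTheory.volume (2*X) T := by
    rw [intervalIntegrable_iff]
    apply (c1.integrableOn_uIoc (a := 2*X) (b := T)).congr_fun ?_ measurableSet_uIoc
    intro t ht
    rw [Set.uIoc_of_le h2XT] at ht
    simp only [wfun, if_neg (show ¬ t ≤ 2 * T ^ (1 - α) from not_le.2 ht.1)]
  have split : (∫ t in X..T, Real.cos (a*t) * wfun T α t)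
      = (∫ t in X..(2*X), Real.cos (a*t) * (3 - t/T))
        + ∫ t in (2*X)..T, Real.cos (a*t) * (1 - t/T) := by
    rw [← e1, ← e2, intervalIntegral.integral_add_adjacent_intervals i1 i2]
  -- split the 3 - t/T piece
  have split3 : (∫ t in X..(2*X), Real.cos (a*t) * (3 - t/T))
      = (∫ t in X..(2*X), Real.cos (a*t) * (1 - t/T))
        + ∫ t in X..(2*X), 2 * Real.cos (a*t) := by
    rw [← intervalIntegral.integral_add (c1.intervalIntegrable _ _) (c2.intervalIntegrable _ _)]
    apply intervalIntegral.integral_congr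
    intro t _
    ring
  have joinXT : (∫ t in X..(2*X), Real.cos (a*t) * (1 - t/T))
        + (∫ t in (2*X)..T, Real.cos (a*t) * (1 - t/T))
      = ∫ t in X..T, Real.cos (a*t) * (1 - t/T) :=
    intervalIntegral.integral_add_adjacent_intervals (c1.intervalIntegrable _ _) (c1.intervalIntegrable _ _)
  have join0 : (∫ t in (0:ℝ)..X, Real.cos (a*t) * (1 - t/T))
        + (∫ t in X..T, Real.cos (a*t) * (1 - t/T))
      = ∫ t in (0:ℝ)..T, Real.cos (a*t) * (1 - t/T) :=
    intervalIntegral.integral_add_adjacent_intervals (c1.intervalIntegrable _ _) (c1.intervalIntegrable _ _)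
  have ha0 : a ≠ 0 := ne_of_gt ha
  -- explicit value of the full integral
  have intT : (∫ t in (0:ℝ)..T, Real.cos (a*t) * (1 - t/T))
      = (1 - Real.cos (a*T)) / (a^2 * T) := by
    have hderiv : ∀ t ∈ Set.uIcc (0:ℝ) T,
        HasDerivAt (fun u => (1 - u/T) * Real.sin (a*u) / a - Real.cos (a*u) / (a^2*T))
          (Real.cos (a*t) * (1 - t/T)) t := by
      intro t _
      have hid : HasDerivAt (fun u : ℝ => a*u) a t := by
        simpa using (hasDerivAt_id t).const_mul a
      have hsin : HasDerivAt (fun u : ℝ => Real.sin (a*u)) (Real.cos (a*t) * a) t :=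
        (Real.hasDerivAt_sin (a*t)).comp t hid
      have hcos : HasDerivAt (fun u : ℝ => Real.cos (a*u)) (-Real.sin (a*t) * a) t :=
        (Real.hasDerivAt_cos (a*t)).comp t hid
      have hlin : HasDerivAt (fun u : ℝ => 1 - u/T) (-(1/T)) t := by
        simpa using ((hasDerivAt_id t).div_const T).const_sub 1
      have := ((hlin.mul hsin).div_const a).sub (hcos.div_const (a^2*T))
      refine this.congr_deriv ?_
      have hTne : T ≠ 0 := hT0.ne'
      field_simp
      ring
    rw [intervalIntegral.integral_eq_sub_of_hasDerivAt hderiv (c1.intervalIntegrable _ _)]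
    have haT : a ^ 2 * T ≠ 0 := by positivity
    field_simp
    simp only [Real.sin_zero, Real.cos_zero, mul_zero, neg_zero]
    ring
  have intT_nonneg : 0 ≤ (∫ t in (0:ℝ)..T, Real.cos (a*t) * (1 - t/T)) := by
    rw [intT]
    apply div_nonneg _ (by positivity)
    have := Real.cos_le_one (a*T)
    linarith
  -- bound the initial piece
  have b1 : |∫ t in (0:ℝ)..X, Real.cos (a*t) * (1 - t/T)| ≤ X := by
    have := intervalIntegral.norm_integral_le_of_norm_le_const (C := 1)
      (f := fun t => Real.cos (a*t) * (1 - t/T)) (a := (0:ℝ)) (b := X) ?_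
    · simpa [abs_of_nonneg hX0.le] using this
    · intro t ht
      rw [Set.uIoc_of_le hX0.le] at ht
      have h1 : |Real.cos (a*t)| ≤ 1 := Real.abs_cos_le_one _
      have h2 : |1 - t/T| ≤ 1 := by
        rw [abs_le]
        constructor
        · have : t / T ≤ 1 := by
            rw [div_le_one hT0]; exact ht.2.trans hXT
          linarith
        · have : 0 ≤ t / T := div_nonneg ht.1.le hT0.le
          linarith
      calc ‖Real.cos (a*t) * (1 - t/T)‖ = |Real.cos (a*t)| * |1 - t/T| := abs_mul _ _
      _ ≤ 1 * 1 := mul_le_mul h1 h2 (abs_nonneg _) zero_le_one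
      _ = 1 := by norm_num
  -- lower bound for the cosine bump
  have b2 : 2 * Real.cos 1 * X ≤ ∫ t in X..(2*X), 2 * Real.cos (a*t) := by
    have hmono : (∫ t in X..(2*X), (2 * Real.cos 1 : ℝ)) ≤ ∫ t in X..(2*X), 2 * Real.cos (a*t) := by
      apply intervalIntegral.integral_mono_on hX2X intervalIntegrable_const
        (c2.intervalIntegrable _ _)
      intro t ht
      have ht0 : 0 ≤ t := le_trans hX0.le ht.1
      have h0 : 0 ≤ a * t := by positivity
      have h1 : a * t ≤ 1 := hat1 t ht0 ht.2
      have hpi : (1:ℝ) ≤ Real.pi := by linarith [Real.pi_gt_three]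
      have := Real.cos_le_cos_of_nonneg_of_le_pi h0 hpi h1
      linarith
    have hc : (∫ t in X..(2*X), (2 * Real.cos 1 : ℝ)) = 2 * Real.cos 1 * X := by
      rw [intervalIntegral.integral_const]
      rw [smul_eq_mul]
      ring
    linarith
  have hcos1 : (1/2:ℝ) < Real.cos 1 := by
    have h3 : (1:ℝ) < Real.pi / 3 := by linarith [Real.pi_gt_three]
    have hle : Real.pi / 3 ≤ Real.pi := by linarith [Real.pi_pos]
    have := Real.cos_lt_cos_of_nonneg_of_le_pi (by norm_num : (0:ℝ) ≤ 1) hle h3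
    rw [Real.cos_pi_div_three] at this
    exact this
  -- assemble
  have hXTint : (∫ t in X..T, Real.cos (a*t) * (1 - t/T))
      = (∫ t in (0:ℝ)..T, Real.cos (a*t) * (1 - t/T))
        - ∫ t in (0:ℝ)..X, Real.cos (a*t) * (1 - t/T) := by linarith
  have b1' : -X ≤ ∫ t in (0:ℝ)..X, Real.cos (a*t) * (1 - t/T) ∧
      (∫ t in (0:ℝ)..X, Real.cos (a*t) * (1 - t/T)) ≤ X := abs_le.mp b1
  rw [split, split3]
  nlinarith [b1'.1, b1'.2, intT_nonneg, b2, hcos1, hX0]
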